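/- arXiv:2003.11205 — 2 statements merged into one kernel-verified Lean document; each statement's English description precedes it below -/
import Mathlib

section
/- For matrices X^(1), ..., X^(N) with X^(n) ∈ 𝔽^{I×K_n}, dim(⋂_{n=1}^N range(X^(n))) = Σ_{n=1}^N rank(X^(n)) − rank(Γ), where Γ is the (N−1)I × (Σ_n K_n) block matrix whose (j)-th block row (for j = 1, ..., N−1) is [X^(1), 0, ..., 0, −X^(j+1), 0, ..., 0] with −X^(j+1) in the (j+1)-th block column. -/
/-- Subspace intersection dimension identity for `N + 1` matrices
`X⁽⁰⁾, ..., X⁽ᴺ⁾` (so at least one matrix): `dim(⋂ₙ range(X⁽ⁿ⁾)) = Σₙ rank(X⁽ⁿ⁾) − rank(Γ)`,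
where `Γ` is the block matrix with `N` block rows, whose `j`-th block row has `X⁽⁰⁾` in the
first block column, `−X⁽ʲ⁺¹⁾` in block column `j+1`, and zeros elsewhere. -/
theorem stmt_11 {𝔽 : Type*} [Field 𝔽] {N I : ℕ} {K : Fin (N + 1) → ℕ}
    (X : (n : Fin (N + 1)) → Matrix (Fin I) (Fin (K n)) 𝔽)
    (Γ : Matrix (Fin N × Fin I) ((n : Fin (N + 1)) × Fin (K n)) 𝔽)
    (hΓ : ∀ (j : Fin N) (i : Fin I) (n : Fin (N + 1)) (k : Fin (K n)),
      Γ (j, i) ⟨n, k⟩ =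
        if n = 0 then X n i k else if n = j.succ then -(X n i k) else 0) :
    Module.finrank 𝔽
        ((⨅ n, LinearMap.range (X n).mulVecLin) : Submodule 𝔽 (Fin I → 𝔽)) =
      (∑ n, (X n).rank) - Γ.rank := by
  classical
  -- row formula for Γ
  have hrow : ∀ (v : ((n : Fin (N + 1)) × Fin (K n)) → 𝔽) (j : Fin N) (i : Fin I),
      Γ.mulVecLin v (j, i) =
        (X 0).mulVec (fun k => v ⟨0, k⟩) i - (X j.succ).mulVec (fun k => v ⟨j.succ, k⟩) i := by
    intro v j i
    have hs : ∀ m : Fin N,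
        (∑ k, Γ (j, i) ⟨m.succ, k⟩ * v ⟨m.succ, k⟩) =
          if m = j then -((X j.succ).mulVec (fun k => v ⟨j.succ, k⟩) i) else 0 := by
      intro m
      by_cases hm : m = j
      · subst hm
        rw [if_pos rfl]
        have hent : ∀ k : Fin (K m.succ), Γ (m, i) ⟨m.succ, k⟩ = -(X m.succ i k) := by
          intro k
          rw [hΓ]
          simp [Fin.succ_ne_zero]
        simp only [hent, neg_mul, Finset.sum_neg_distrib]
        rfl
      · have : ∀ k : Fin (K m.succ), Γ (j, i) ⟨m.succ, k⟩ = 0 := by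
          intro k
          rw [hΓ]
          simp [Fin.succ_ne_zero, Fin.succ_inj, hm]
        simp [this, hm]
    have : Γ.mulVecLin v (j, i) = ∑ n, ∑ k, Γ (j, i) ⟨n, k⟩ * v ⟨n, k⟩ := by
      show (∑ p : (n : Fin (N + 1)) × Fin (K n), Γ (j, i) p * v p) = _
      rw [← Finset.univ_sigma_univ, Finset.sum_sigma]
    rw [this, Fin.sum_univ_succ]
    have h0 : (∑ k, Γ (j, i) ⟨0, k⟩ * v ⟨0, k⟩) = (X 0).mulVec (fun k => v ⟨0, k⟩) i := by
      have hent : ∀ k : Fin (K 0), Γ (j, i) ⟨0, k⟩ = X 0 i k := by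
        intro k; rw [hΓ]; simp
      simp only [hent]
      rfl
    rw [h0]
    simp only [hs]
    rw [Finset.sum_ite_eq' Finset.univ j
      (fun _ => -((X j.succ).mulVec (fun k => v ⟨j.succ, k⟩) i))]
    simp [sub_eq_add_neg]
  -- kernel membership
  have hker : ∀ v : ((n : Fin (N + 1)) × Fin (K n)) → 𝔽,
      v ∈ LinearMap.ker Γ.mulVecLin ↔
        ∀ j : Fin N, (X j.succ).mulVec (fun k => v ⟨j.succ, k⟩) =
          (X 0).mulVec (fun k => v ⟨0, k⟩) := by
    intro v
    rw [LinearMap.mem_ker]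
    constructor
    · intro h j
      funext i
      have h2 : (X 0).mulVec (fun k => v ⟨0, k⟩) i
          - (X j.succ).mulVec (fun k => v ⟨j.succ, k⟩) i = 0 := by
        rw [← hrow]
        simpa using congrFun h (j, i)
      exact (sub_eq_zero.mp h2).symm
    · intro h
      funext p
      obtain ⟨j, i⟩ := p
      rw [hrow, h j]
      simp
  have hall : ∀ v ∈ LinearMap.ker Γ.mulVecLin, ∀ n : Fin (N + 1),
      (X n).mulVec (fun k => v ⟨n, k⟩) = (X 0).mulVec (fun k => v ⟨0, k⟩) := by
    intro v hv n
    by_cases hn : n = 0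
    · subst hn; rfl
    · obtain ⟨j, rfl⟩ := Fin.exists_succ_eq_of_ne_zero hn
      exact (hker v).mp hv j
  -- the map f : ker Γ → 𝔽^I, v ↦ X⁰ v₀
  set π : (((n : Fin (N + 1)) × Fin (K n)) → 𝔽) →ₗ[𝔽] (Fin (K 0) → 𝔽) :=
    LinearMap.funLeft 𝔽 𝔽 (fun k => ⟨0, k⟩) with hπ
  set f : ↥(LinearMap.ker Γ.mulVecLin) →ₗ[𝔽] (Fin I → 𝔽) :=
    ((X 0).mulVecLin.comp π).domRestrict (LinearMap.ker Γ.mulVecLin) with hf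
  have hfapply : ∀ v : ↥(LinearMap.ker Γ.mulVecLin),
      f v = (X 0).mulVec (fun k => v.1 ⟨0, k⟩) := fun v => rfl
  -- range of f is the intersection
  have hrange : LinearMap.range f = ⨅ n, LinearMap.range (X n).mulVecLin := by
    apply le_antisymm
    · rintro w ⟨⟨v, hv⟩, rfl⟩
      rw [Submodule.mem_iInf]
      intro n
      exact ⟨fun k => v ⟨n, k⟩, by rw [Matrix.mulVecLin_apply, hall v hv n]; rfl⟩
    · intro w hw
      rw [Submodule.mem_iInf] at hw
      choose u hu using fun n => hw n
      have hmem : (fun p : (n : Fin (N + 1)) × Fin (K n) => u p.1 p.2) ∈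
          LinearMap.ker Γ.mulVecLin := by
        rw [hker]
        intro j
        show (X j.succ).mulVec (u j.succ) = (X 0).mulVec (u 0)
        rw [← Matrix.mulVecLin_apply, ← Matrix.mulVecLin_apply, hu, hu]
      refine ⟨⟨_, hmem⟩, ?_⟩
      rw [hfapply]
      show (X 0).mulVec (u 0) = w
      rw [← Matrix.mulVecLin_apply, hu]
  -- kernel of f is equivalent to the product of the kernels
  have hmemk : ∀ v : ↥(LinearMap.ker f), ∀ n : Fin (N + 1),
      (fun k => v.1.1 ⟨n, k⟩) ∈ LinearMap.ker (X n).mulVecLin := by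
    intro v n
    rw [LinearMap.mem_ker, Matrix.mulVecLin_apply, hall v.1 v.1.2 n]
    have := v.2
    rw [LinearMap.mem_ker, hfapply] at this
    exact this
  have hmemk' : ∀ w : (n : Fin (N + 1)) → ↥(LinearMap.ker (X n).mulVecLin),
      (fun p : (n : Fin (N + 1)) × Fin (K n) => (w p.1).1 p.2) ∈
        LinearMap.ker Γ.mulVecLin := by
    intro w
    rw [hker]
    intro j
    show (X j.succ).mulVec (w j.succ).1 = (X 0).mulVec (w 0).1
    have h1 := (w j.succ).2
    have h2 := (w 0).2
    rw [LinearMap.mem_ker, Matrix.mulVecLin_apply] at h1 h2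
    rw [h1, h2]
  let e : ↥(LinearMap.ker f) ≃ₗ[𝔽] ((n : Fin (N + 1)) → ↥(LinearMap.ker (X n).mulVecLin)) :=
    { toFun := fun v n => ⟨fun k => v.1.1 ⟨n, k⟩, hmemk v n⟩
      map_add' := fun v w => by ext n k; rfl
      map_smul' := fun c v => by ext n k; rfl
      invFun := fun w => ⟨⟨fun p => (w p.1).1 p.2, hmemk' w⟩, by
        rw [LinearMap.mem_ker, hfapply]
        show (X 0).mulVec (w 0).1 = 0
        have := (w 0).2
        rwa [LinearMap.mem_ker, Matrix.mulVecLin_apply] at this⟩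
      left_inv := fun v => by
        apply Subtype.ext; apply Subtype.ext
        funext p; obtain ⟨n, k⟩ := p; rfl
      right_inv := fun w => by ext n k; rfl }
  have hkerf : Module.finrank 𝔽 ↥(LinearMap.ker f) =
      ∑ n, Module.finrank 𝔽 ↥(LinearMap.ker (X n).mulVecLin) := by
    set_option synthInstance.maxHeartbeats 1000000 in
    rw [LinearEquiv.finrank_eq e, Module.finrank_pi_fintype]
  -- rank-nullity facts
  have hΓrn : Γ.rank + Module.finrank 𝔽 ↥(LinearMap.ker Γ.mulVecLin) = ∑ n, K n := by
    have := LinearMap.finrank_range_add_finrank_ker Γ.mulVecLin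
    have hr : Γ.rank = Module.finrank 𝔽 ↥(LinearMap.range Γ.mulVecLin) := rfl
    rw [hr]
    rw [Module.finrank_pi, Fintype.card_sigma] at this
    simpa using this
  have hXrn : ∀ n, (X n).rank + Module.finrank 𝔽 ↥(LinearMap.ker (X n).mulVecLin) = K n := by
    intro n
    have := LinearMap.finrank_range_add_finrank_ker (X n).mulVecLin
    have hr : (X n).rank = Module.finrank 𝔽 ↥(LinearMap.range (X n).mulVecLin) := rfl
    rw [hr]
    rwa [Module.finrank_pi, Fintype.card_fin] at this
  have hfrn : Module.finrank 𝔽 ↥(LinearMap.range f) + Module.finrank 𝔽 ↥(LinearMap.ker f) =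
      Module.finrank 𝔽 ↥(LinearMap.ker Γ.mulVecLin) :=
    LinearMap.finrank_range_add_finrank_ker f
  have hsum : (∑ n, (X n).rank) + ∑ n, Module.finrank 𝔽 ↥(LinearMap.ker (X n).mulVecLin)
      = ∑ n, K n := by
    rw [← Finset.sum_add_distrib]
    exact Finset.sum_congr rfl fun n _ => hXrn n
  rw [← hrange]
  omega
end

section
/- Let X^(n) = [M, C^(n)] S^(n)T for n = 1, ..., N, where M ∈ 𝔽^{I×R}, C^(n) ∈ 𝔽^{I×L_n}, S^(n) ∈ 𝔽^{K_n×(R+L_n)}. Suppose each S^(n) has full column rank and the block matrix Γ^(N) = [ [C^(1), −M, −C^(2), 0, ..., 0]; [C^(1), 0, 0, −M, −C^(3), ...]; ...; [C^(1), 0, ..., −M, −C^(N)] ] ∈ 𝔽^{(N−1)I × ((N−1)R + Σ L_n)} has full column rank. Then ⋂_{n=1}^N range(X^(n)) = range(M) and this intersection has dimension R. -/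
/-!
Every view has the same column space as `[M, C⁽ⁿ⁾]`, because `S⁽ⁿ⁾ᵀ` is surjective. If `y` lies in
all of these, write `y = M aₙ + C⁽ⁿ⁾ cₙ`; then the vector `(c₀, (aₙ₊₁ − a₀, cₙ₊₁)ₙ)` lies in the
kernel of `Γ`, so `c₀ = 0` and `y = M a₀`. Applying `Γ` to `(0, (x, 0)ₙ)` likewise shows that `M`
has full column rank, which gives the dimension `R`.
-/

open Matrix

namespace Matrix

variable {m n k 𝔽 : Type*} [Fintype n] [Fintype k] [Field 𝔽]

theorem mulVecLin_transpose_surjective_of_injective [DecidableEq n] {S : Matrix k n 𝔽}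
    (hS : Function.Injective S.mulVecLin) : Function.Surjective Sᵀ.mulVecLin := by
  rw [← LinearMap.range_eq_top]
  apply Submodule.eq_top_of_finrank_eq
  rw [← Matrix.rank, rank_transpose, Matrix.rank, LinearMap.finrank_range_of_inj hS]

theorem range_mulVecLin_mul_transpose_of_injective {A : Matrix m n 𝔽} {S : Matrix k n 𝔽}
    (hS : Function.Injective S.mulVecLin) :
    LinearMap.range (A * Sᵀ).mulVecLin = LinearMap.range A.mulVecLin := by
  classical
  rw [mulVecLin_mul, LinearMap.range_comp,
    LinearMap.range_eq_top.mpr (mulVecLin_transpose_surjective_of_injective hS),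
    Submodule.map_top]

end Matrix

section GCCA

variable {𝔽 : Type*} [Field 𝔽] {N I R : ℕ} {L : Fin (N + 1) → ℕ}

def gccaMatrix (M : Matrix (Fin I) (Fin R) 𝔽)
    (C : (n : Fin (N + 1)) → Matrix (Fin I) (Fin (L n)) 𝔽) :
    Matrix (Fin N × Fin I) (Fin (L 0) ⊕ ((j : Fin N) × (Fin R ⊕ Fin (L j.succ)))) 𝔽 :=
  Matrix.of fun ji => Sum.elim (C 0 ji.2) fun p =>
    if p.1 = ji.1 then -fromCols M (C p.1.succ) ji.2 p.2 else 0

variable {M : Matrix (Fin I) (Fin R) 𝔽} {C : (n : Fin (N + 1)) → Matrix (Fin I) (Fin (L n)) 𝔽}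

theorem gccaMatrix_mulVec_sumElim (u : Fin (L 0) → 𝔽)
    (v : (j : Fin N) → Fin R ⊕ Fin (L j.succ) → 𝔽) (j : Fin N) (i : Fin I) :
    (gccaMatrix M C *ᵥ Sum.elim u fun p => v p.1 p.2) (j, i) =
      (C 0 *ᵥ u) i - (fromCols M (C j.succ) *ᵥ v j) i := by
  simp [gccaMatrix, mulVec, dotProduct, Fintype.sum_sum_type, Fintype.sum_sigma, ite_mul,
    sub_eq_add_neg]

theorem eq_zero_of_fromCols_mulVec_eq (hΓ : Function.Injective (gccaMatrix M C).mulVecLin)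
    {u : Fin (L 0) → 𝔽} {v : (j : Fin N) → Fin R ⊕ Fin (L j.succ) → 𝔽}
    (huv : ∀ j, fromCols M (C j.succ) *ᵥ v j = C 0 *ᵥ u) : u = 0 ∧ v = 0 := by
  have hker : (gccaMatrix M C).mulVecLin (Sum.elim u fun p => v p.1 p.2) = 0 := by
    ext ⟨j, i⟩
    simp [gccaMatrix_mulVec_sumElim, huv]
  have hzero := hΓ (hker.trans (map_zero _).symm)
  exact ⟨funext fun l => congrFun hzero (Sum.inl l),
    funext fun j => funext fun s => congrFun hzero (Sum.inr ⟨j, s⟩)⟩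

theorem mulVecLin_injective_of_injective_gccaMatrix (hN : 1 ≤ N)
    (hΓ : Function.Injective (gccaMatrix M C).mulVecLin) : Function.Injective M.mulVecLin := by
  rw [← LinearMap.ker_eq_bot, LinearMap.ker_eq_bot']
  intro x hx
  obtain ⟨-, hv⟩ := eq_zero_of_fromCols_mulVec_eq (u := 0)
    (v := fun _ => Sum.elim x 0) hΓ fun j => by simpa [fromCols_mulVec_sumElim] using hx
  exact funext fun r => congrFun (congrFun hv ⟨0, hN⟩) (Sum.inl r)

theorem iInf_range_fromCols_eq_range (hΓ : Function.Injective (gccaMatrix M C).mulVecLin) :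
    ⨅ n, LinearMap.range (fromCols M (C n)).mulVecLin = LinearMap.range M.mulVecLin := by
  refine le_antisymm (fun y hy => ?_) (le_iInf fun n => ?_)
  · choose z hz using fun n => Submodule.mem_iInf _ |>.mp hy n
    simp only [mulVecLin_apply] at hz
    have hy0 : M *ᵥ (z 0 ∘ Sum.inl) + C 0 *ᵥ (z 0 ∘ Sum.inr) = y := by
      rw [← fromCols_mulVec, hz 0]
    obtain ⟨hc, -⟩ := eq_zero_of_fromCols_mulVec_eq (u := z 0 ∘ Sum.inr)
      (v := fun j => z j.succ - Sum.elim (z 0 ∘ Sum.inl) 0) hΓ fun j => by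
        rw [mulVec_sub, hz, fromCols_mulVec_sumElim, ← hy0]
        simp
    refine ⟨z 0 ∘ Sum.inl, ?_⟩
    rw [mulVecLin_apply, ← hy0, hc, mulVec_zero, add_zero]
  · rintro _ ⟨x, rfl⟩
    exact ⟨Sum.elim x 0, by simp⟩

end GCCA

/-- GCCA identifiability (Theorem 2). Views `X⁽ⁿ⁾ = [M, C⁽ⁿ⁾] S⁽ⁿ⁾ᵀ` for `n = 0, ..., N`
(so `N + 1 ≥ 2` views). If each `S⁽ⁿ⁾` has full column rank and the block matrix `Γ`
(with `N` block rows, the `j`-th being `[C⁽⁰⁾, 0, …, 0, −M, −C⁽ʲ⁺¹⁾, 0, …, 0]`, where the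
pair `(−M, −C⁽ʲ⁺¹⁾)` occupies the block columns of view `j+1`) has full column rank, then
`⋂ₙ range(X⁽ⁿ⁾) = range(M)` and this intersection has dimension `R`. -/
theorem stmt_12 {𝔽 : Type*} [Field 𝔽] {N I R : ℕ} (hN : 1 ≤ N)
    {L K : Fin (N + 1) → ℕ}
    (M : Matrix (Fin I) (Fin R) 𝔽)
    (C : (n : Fin (N + 1)) → Matrix (Fin I) (Fin (L n)) 𝔽)
    (S : (n : Fin (N + 1)) → Matrix (Fin (K n)) (Fin R ⊕ Fin (L n)) 𝔽)
    (X : (n : Fin (N + 1)) → Matrix (Fin I) (Fin (K n)) 𝔽)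
    (hX : ∀ n, X n = Matrix.fromCols M (C n) * (S n).transpose)
    (hS : ∀ n, Function.Injective (S n).mulVecLin)
    (Γ : Matrix (Fin N × Fin I)
      (Fin (L 0) ⊕ ((j : Fin N) × (Fin R ⊕ Fin (L j.succ)))) 𝔽)
    (hΓ1 : ∀ (j : Fin N) (i : Fin I) (l : Fin (L 0)),
      Γ (j, i) (Sum.inl l) = C 0 i l)
    (hΓ2 : ∀ (j : Fin N) (i : Fin I) (j' : Fin N) (r : Fin R),
      Γ (j, i) (Sum.inr ⟨j', Sum.inl r⟩) = if j' = j then -(M i r) else 0)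
    (hΓ3 : ∀ (j : Fin N) (i : Fin I) (j' : Fin N) (l : Fin (L j'.succ)),
      Γ (j, i) (Sum.inr ⟨j', Sum.inr l⟩) = if j' = j then -(C j'.succ i l) else 0)
    (hΓ : Function.Injective Γ.mulVecLin) :
    (⨅ n, LinearMap.range (X n).mulVecLin) = LinearMap.range M.mulVecLin ∧
    Module.finrank 𝔽
      ((⨅ n, LinearMap.range (X n).mulVecLin) : Submodule 𝔽 (Fin I → 𝔽)) = R := by
  obtain rfl : Γ = gccaMatrix M C := by
    ext ⟨j, i⟩ (l | ⟨j', r | l⟩) <;> simp [gccaMatrix, hΓ1, hΓ2, hΓ3]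
  have hinter : ⨅ n, LinearMap.range (X n).mulVecLin = LinearMap.range M.mulVecLin := by
    simp_rw [hX, range_mulVecLin_mul_transpose_of_injective (hS _)]
    exact iInf_range_fromCols_eq_range hΓ
  refine ⟨hinter, ?_⟩
  rw [hinter, LinearMap.finrank_range_of_inj (mulVecLin_injective_of_injective_gccaMatrix hN hΓ),
    Module.finrank_fin_fun]
end
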